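/- Let u_n be the number of uniquely closable Motzkin trees with exactly n nodes and let U = Σ_{n≥0} u_n z^n be the corresponding formal power series with rational coefficients. Then U satisfies the algebraic equation z²·U⁴ − 2z·U³ + (z + 1)·U² − U + z² = 0 in the ring of formal power series. -/

import Mathlib

/-- Motzkin trees (binary-unary trees): leaf `v`, unary `l`, binary `a`. -/
inductive Mot : Type
  | v : Mot
  | l : Mot → Mot
  | a : Mot → Mot → Mot
deriving DecidableEq

/-- Lambda terms in de Bruijn form. -/
inductive Lam : Type
  | v : Nat → Lam
  | l : Lam → Lam
  | a : Lam → Lam → Lam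
deriving DecidableEq

/-- `t` is closed at depth `d`. -/
def Lam.closedAt : Lam → Nat → Prop
  | .v i, d => i < d
  | .l t, d => t.closedAt (d + 1)
  | .a s t, d => s.closedAt d ∧ t.closedAt d

/-- The Motzkin-tree skeleton of a de Bruijn term. -/
def Lam.skel : Lam → Mot
  | .v _ => .v
  | .l t => .l t.skel
  | .a s t => .a s.skel t.skel

/-- Total node count of a Motzkin tree. -/
def Mot.nodes : Mot → ℕ
  | .v => 1
  | .l t => 1 + t.nodes
  | .a s t => 1 + s.nodes + t.nodes

/-- A Motzkin tree is uniquely closable if exactly one closed term has it as skeleton. -/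
def Mot.UniquelyClosable (X : Mot) : Prop := ∃! t : Lam, t.closedAt 0 ∧ t.skel = X

/-- `u n` is the number of uniquely closable Motzkin trees with exactly `n` nodes. -/
noncomputable def u (n : ℕ) : ℕ := Nat.card {t : Mot // t.nodes = n ∧ t.UniquelyClosable}

/-- The ordinary generating function of the `u n`, as a formal power series over ℚ. -/
noncomputable def U : PowerSeries ℚ := PowerSeries.mk fun n => (u n : ℚ)

/-!
The number of closed terms at depth `d` with skeleton `X` is multiplicative at an `a`-node,
shifts the depth by one under an `l`-node, and is `d` at a leaf. So `X` has exactly one closing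
at depth `d` iff every leaf has exactly `1 - d` occurrences of `l` above it: at depth `1` these
are the binary trees (no `l` at all), at depth `0` the trees built by `a` from subtrees `l B`
with `B` binary. With `B(z)` the series of binary trees this gives `B = z + z B²` and
`U = z B + z U²`, and eliminating `z B = U - z U²` yields the quartic.
-/

namespace Mot

def closings (X : Mot) (d : ℕ) : Set Lam := {t | t.closedAt d ∧ t.skel = X}

theorem closings_v (d : ℕ) : closings v d = Lam.v '' Set.Iio d := by
  ext t
  cases t <;> simp [closings, Lam.closedAt, Lam.skel]

theorem closings_l (X : Mot) (d : ℕ) : closings (l X) d = Lam.l '' closings X (d + 1) := by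
  ext t
  cases t <;> simp [closings, Lam.closedAt, Lam.skel]

theorem closings_a (X Y : Mot) (d : ℕ) :
    closings (a X Y) d = Set.image2 Lam.a (closings X d) (closings Y d) := by
  ext t
  cases t <;> simp [closings, Lam.closedAt, Lam.skel, and_and_and_comm]

theorem encard_closings_v (d : ℕ) : (closings v d).encard = d := by
  rw [closings_v, Function.Injective.encard_image fun _ _ => Lam.v.inj, ← Finset.coe_range,
    Set.encard_coe_eq_coe_finsetCard, Finset.card_range]

theorem encard_closings_l (X : Mot) (d : ℕ) :
    (closings (l X) d).encard = (closings X (d + 1)).encard := by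
  rw [closings_l, Function.Injective.encard_image fun _ _ => Lam.l.inj]

theorem encard_closings_a (X Y : Mot) (d : ℕ) :
    (closings (a X Y) d).encard = (closings X d).encard * (closings Y d).encard := by
  rw [closings_a, ← Set.image_prod, (?_ : Function.Injective _).encard_image, Set.encard_prod]
  rintro ⟨_, _⟩ ⟨_, _⟩ h
  simpa using h

def UniquelyClosableAt (X : Mot) (d : ℕ) : Prop := (X.closings d).encard = 1

theorem uniquelyClosableAt_zero_iff {X : Mot} :
    X.UniquelyClosableAt 0 ↔ X.UniquelyClosable := by
  simp only [UniquelyClosableAt, UniquelyClosable, Set.encard_eq_one,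
    Set.eq_singleton_iff_unique_mem, ExistsUnique]
  rfl

@[simp]
theorem uniquelyClosableAt_v {d : ℕ} : v.UniquelyClosableAt d ↔ d = 1 := by
  rw [UniquelyClosableAt, encard_closings_v, Nat.cast_eq_one]

@[simp]
theorem uniquelyClosableAt_l {X : Mot} {d : ℕ} :
    (l X).UniquelyClosableAt d ↔ X.UniquelyClosableAt (d + 1) := by
  rw [UniquelyClosableAt, UniquelyClosableAt, encard_closings_l]

@[simp]
theorem uniquelyClosableAt_a {X Y : Mot} {d : ℕ} :
    (a X Y).UniquelyClosableAt d ↔ X.UniquelyClosableAt d ∧ Y.UniquelyClosableAt d := by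
  rw [UniquelyClosableAt, encard_closings_a, mul_eq_one]
  rfl

theorem UniquelyClosableAt.le_one {X : Mot} {d : ℕ} (h : X.UniquelyClosableAt d) : d ≤ 1 := by
  induction X generalizing d with
  | v => exact (uniquelyClosableAt_v.mp h).le
  | l X ih => have := ih (uniquelyClosableAt_l.mp h); omega
  | a X Y ih _ => exact ih (uniquelyClosableAt_a.mp h).1

theorem one_le_nodes (X : Mot) : 1 ≤ X.nodes := by
  cases X <;> simp only [nodes] <;> omega

def upTo : ℕ → Finset Mot
  | 0 => ∅
  | n + 1 => insert v ((upTo n).image l ∪ (upTo n ×ˢ upTo n).image fun p => a p.1 p.2)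

theorem mem_upTo_of_nodes_le {X : Mot} {n : ℕ} (h : X.nodes ≤ n) : X ∈ upTo n := by
  induction n generalizing X with
  | zero => exact absurd h (by have := X.one_le_nodes; omega)
  | succ n ih =>
    cases X with
    | v => simp [upTo]
    | l X => simp only [nodes] at h; simp [upTo, ih (X := X) (by omega)]
    | a X Y =>
      simp only [nodes] at h
      have := X.one_le_nodes; have := Y.one_le_nodes
      simp [upTo, ih (X := X) (by omega), ih (X := Y) (by omega)]

def withNodes (n : ℕ) : Finset Mot := {X ∈ upTo n | X.nodes = n}

@[simp]
theorem mem_withNodes {X : Mot} {n : ℕ} : X ∈ withNodes n ↔ X.nodes = n := by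
  simp only [withNodes, Finset.mem_filter, and_iff_right_iff_imp]
  exact fun h => mem_upTo_of_nodes_le h.le

theorem withNodes_zero : withNodes 0 = ∅ := by
  ext X
  simpa using Nat.one_le_iff_ne_zero.mp X.one_le_nodes

open Finset PowerSeries

section
open scoped Classical

theorem filter_withNodes_succ (P : Mot → Prop) (hP : ∀ X Y, P (a X Y) ↔ P X ∧ P Y) (n : ℕ) :
    {X ∈ withNodes (n + 1) | P X} =
      {X ∈ ({v} : Finset Mot) | n = 0 ∧ P X} ∪
        ({X ∈ withNodes n | P (l X)}.image l ∪
          (antidiagonal n).biUnion fun ij =>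
            ({X ∈ withNodes ij.1 | P X} ×ˢ {X ∈ withNodes ij.2 | P X}).image
              fun p => a p.1 p.2) := by
  ext X
  cases X with
  | v => simp [nodes, eq_comm]
  | l X => simp [nodes, add_comm]
  | a X Y =>
    have nodes_a : 1 + X.nodes + Y.nodes = n + 1 ↔ X.nodes + Y.nodes = n := by omega
    simp [nodes, hP, nodes_a]

theorem card_filter_withNodes_succ (P : Mot → Prop) (hP : ∀ X Y, P (a X Y) ↔ P X ∧ P Y)
    (n : ℕ) :
    #{X ∈ withNodes (n + 1) | P X} =
      (if n = 0 ∧ P v then 1 else 0) + #{X ∈ withNodes n | P (l X)} +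
        ∑ ij ∈ antidiagonal n, #{X ∈ withNodes ij.1 | P X} * #{X ∈ withNodes ij.2 | P X} := by
  have a_injective : Function.Injective fun p : Mot × Mot => a p.1 p.2 := fun _ _ h => by
    simpa [Prod.ext_iff] using h
  rw [filter_withNodes_succ P hP, card_union_of_disjoint, card_union_of_disjoint,
    card_image_of_injective _ fun _ _ => l.inj, card_biUnion, card_filter, sum_singleton,
    add_assoc]
  · refine congrArg _ (congrArg _ (sum_congr rfl fun ij _ => ?_))
    rw [card_image_of_injective _ a_injective, card_product]
  · intro ij hij kl hkl hne
    simp only [mem_coe, HasAntidiagonal.mem_antidiagonal] at hij hkl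
    simp only [Function.onFun, disjoint_left, mem_image, mem_product, mem_filter, mem_withNodes]
    rintro _ ⟨⟨X, Y⟩, ⟨⟨hX, -⟩, hY, -⟩, rfl⟩ ⟨⟨X', Y'⟩, ⟨⟨hX', -⟩, hY', -⟩, h⟩
    obtain ⟨rfl, rfl⟩ : X' = X ∧ Y' = Y := by simpa using h
    exact hne (Prod.ext (hX.symm.trans hX') (by omega))
  · simp only [disjoint_left, mem_image, mem_biUnion]
    rintro _ ⟨X, -, rfl⟩ ⟨_, -, _, -, h⟩
    exact Mot.noConfusion h
  · simp [disjoint_left]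

noncomputable def genFun (P : Mot → Prop) : PowerSeries ℚ :=
  PowerSeries.mk fun n => #{X ∈ withNodes n | P X}

theorem genFun_eq_zero {P : Mot → Prop} (hP : ∀ X, ¬P X) : genFun P = 0 := by
  ext n
  simp [genFun, hP]

theorem genFun_eq (P : Mot → Prop) (hP : ∀ X Y, P (a X Y) ↔ P X ∧ P Y) :
    genFun P = (if P v then X else 0) + X * genFun (fun Y => P (l Y)) + X * genFun P ^ 2 := by
  ext (_ | n)
  · split_ifs <;> simp [genFun, withNodes_zero]
  · rw [genFun, coeff_mk, card_filter_withNodes_succ P hP, map_add, map_add, coeff_succ_X_mul,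
      coeff_succ_X_mul, sq, coeff_mul]
    push_cast [genFun, coeff_mk, apply_ite (coeff (n + 1)), coeff_X, map_zero]
    congr 2
    by_cases P v <;> simp [*]

theorem genFun_uniquelyClosableAt_zero :
    genFun (·.UniquelyClosableAt 0) =
      X * genFun (·.UniquelyClosableAt 1) + X * genFun (·.UniquelyClosableAt 0) ^ 2 := by
  simpa using genFun_eq (·.UniquelyClosableAt 0) fun _ _ => uniquelyClosableAt_a

theorem genFun_uniquelyClosableAt_one :
    genFun (·.UniquelyClosableAt 1) = X + X * genFun (·.UniquelyClosableAt 1) ^ 2 := by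
  have not_closable_at_two (Y : Mot) : ¬Y.UniquelyClosableAt 2 := fun h => by
    have := h.le_one
    omega
  simpa [genFun_eq_zero not_closable_at_two] using
    genFun_eq (·.UniquelyClosableAt 1) fun _ _ => uniquelyClosableAt_a

end

end Mot

open Finset Classical in
theorem u_eq_card (n : ℕ) : u n = #{X ∈ Mot.withNodes n | X.UniquelyClosableAt 0} := by
  rw [u, ← Nat.card_eq_finsetCard]
  exact Nat.card_congr <| Equiv.subtypeEquivRight fun X => by
    simp [Mot.uniquelyClosableAt_zero_iff]

theorem U_eq_genFun : U = Mot.genFun (·.UniquelyClosableAt 0) := by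
  ext n
  simp [U, Mot.genFun, u_eq_card]

theorem stmt14 :
    (PowerSeries.X : PowerSeries ℚ) ^ 2 * U ^ 4 - 2 * PowerSeries.X * U ^ 3 +
      (PowerSeries.X + 1) * U ^ 2 - U + PowerSeries.X ^ 2 = 0 := by
  have hU := Mot.genFun_uniquelyClosableAt_zero
  rw [← U_eq_genFun] at hU
  set B := Mot.genFun (·.UniquelyClosableAt 1)
  linear_combination (PowerSeries.X * B + (U - PowerSeries.X * U ^ 2) - 1) * hU -
    PowerSeries.X * Mot.genFun_uniquelyClosableAt_one
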